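/- X²_{α,θ} = ⋃_{k=0}^{p-1} (e^{iθ})^k K²_{α,θ}, where K²_{α,θ} is the attractor of the IFS {ψ₁(z) = α·z̄, ψ₂(z) = α e^{iθ}·z̄ + α} and X²_{α,θ} = { Σ_{n≥1} δₙ ∏_{j=1}^n ηⱼ : (δₙ) ∈ W^±_θ }. -/

import Mathlib

open Complex

/-- e^{iθ} -/
noncomputable def rot (θ : ℝ) : ℂ := Complex.exp (θ * Complex.I)

/-- The digit set Δ_θ = {0, 1, e^{iθ}, …, e^{(p-1)iθ}}. -/
def Delta (θ : ℝ) (p : ℕ) : Set ℂ := insert 0 {z | ∃ k, k < p ∧ z = rot θ ^ k}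

/-- Signed Revolving Condition: each nonzero digit equals e^{+iθ} times the previous
nonzero digit if its position j₀ is odd, and e^{-iθ} times it if j₀ is even.
Sequences are indexed from 1; index 0 is a dummy (digit 0). -/
def SRC (θ : ℝ) (δ : ℕ → ℂ) : Prop :=
  ∀ j k : ℕ, j < k → δ j ≠ 0 → δ k ≠ 0 → (∀ m, j < m → m < k → δ m = 0) →
    δ k = (if Odd j then rot θ else (rot θ)⁻¹) * δ j

/-- Membership in W^±_θ (with the convention δ 0 = 0, i.e. sequences start at index 1). -/
def Wsigned (θ : ℝ) (p : ℕ) (δ : ℕ → ℂ) : Prop :=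
  δ 0 = 0 ∧ (∀ n, δ n ∈ Delta θ p) ∧ SRC θ δ

/-- The first nonzero digit of δ is c (or δ is identically zero). -/
def FirstNonzero (δ : ℕ → ℂ) (c : ℂ) : Prop :=
  (∀ n, δ n = 0) ∨ ∃ j, δ j = c ∧ ∀ m, m < j → δ m = 0

/-- η_j = α for odd j, conj α for even j. -/
noncomputable def eta (α : ℂ) (j : ℕ) : ℂ := if Odd j then α else starRingEnd ℂ α

/-- X²₁ : points from signed revolving sequences with first nonzero digit 1. -/
noncomputable def X2one (α : ℂ) (θ : ℝ) (p : ℕ) : Set ℂ :=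
  {x | ∃ δ : ℕ → ℂ, Wsigned θ p δ ∧ FirstNonzero δ 1 ∧
    x = ∑' n, δ n * ∏ j ∈ Finset.Icc 1 n, eta α j}

/-- X²_{α,θ} : points from all signed revolving sequences. -/
noncomputable def X2full (α : ℂ) (θ : ℝ) (p : ℕ) : Set ℂ :=
  {x | ∃ δ : ℕ → ℂ, Wsigned θ p δ ∧
    x = ∑' n, δ n * ∏ j ∈ Finset.Icc 1 n, eta α j}

/-!
A signed revolving sequence with leading digit `1` is determined by its zero pattern
`ω ∈ {0,1}^ℕ`, and the coding map `π ω = ∑ δₙ η₁⋯ηₙ` is bounded and satisfies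
`π (b :: ω) = ψ_b (π ω)`: dropping the first digit and conjugating (and rotating back by `e^{iθ}`
if that digit was `1`) gives again such a sequence. For contractions `ψ_b` and a compact
`K = ψ₁ K ∪ ψ₂ K`, any bounded solution of this functional equation has range exactly `K`:
`π ω` is the limit of `ψ_{ω₀} ∘ ⋯ ∘ ψ_{ωₙ₋₁} y` for `y ∈ K`, and a point of `K` is `π ω` for the
itinerary `ω` of one of its backward orbits. Finally, every signed revolving sequence is
`e^{ikθ}` times one with leading digit `1`, for some `k < p`.
-/

open Filter Topology Set ComplexConjugate
open scoped NNReal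

namespace IFS

variable {X β : Type*} {f : β → X → X}

def compose (f : β → X → X) (ω : ℕ → β) : ℕ → X → X
  | 0 => id
  | n + 1 => compose f ω n ∘ f (ω n)

lemma lipschitzWith_compose [PseudoMetricSpace X] {c : ℝ≥0} (hf : ∀ b, LipschitzWith c (f b))
    (ω : ℕ → β) (n : ℕ) : LipschitzWith (c ^ n) (compose f ω n) := by
  induction n with
  | zero => exact LipschitzWith.id
  | succ n ih => rw [pow_succ]; exact ih.comp (hf (ω n))

lemma mapsTo_compose {K : Set X} (hK : ∀ b, MapsTo (f b) K K) (ω : ℕ → β) (n : ℕ) :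
    MapsTo (compose f ω n) K K := by
  induction n with
  | zero => exact mapsTo_id K
  | succ n ih => exact ih.comp (hK (ω n))

variable {π : (ℕ → β) → X}

lemma compose_apply_shift (hπ : ∀ ω, π ω = f (ω 0) (π fun n => ω (n + 1))) (ω : ℕ → β)
    (n : ℕ) : compose f ω n (π fun k => ω (k + n)) = π ω := by
  induction n with
  | zero => rfl
  | succ n ih =>
    rw [← ih, hπ fun k => ω (k + n)]
    simp only [compose, Function.comp_apply, zero_add, add_right_comm _ 1 n, add_assoc]

lemma tendsto_compose [PseudoMetricSpace X] {c : ℝ≥0} (hf : ∀ b, LipschitzWith c (f b))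
    (hc : c < 1)
    (hπ : ∀ ω, π ω = f (ω 0) (π fun n => ω (n + 1))) (hπb : Bornology.IsBounded (range π))
    (ω : ℕ → β) {y : ℕ → X} (hy : Bornology.IsBounded (range y)) :
    Tendsto (fun n => compose f ω n (y n)) atTop (𝓝 (π ω)) := by
  obtain ⟨C, hC⟩ := Metric.isBounded_iff.1 (hy.union hπb)
  have hle : ∀ n, dist (compose f ω n (y n)) (π ω) ≤ c ^ n * C := fun n => by
    rw [← compose_apply_shift hπ ω n]
    refine ((lipschitzWith_compose hf ω n).dist_le_mul _ _).trans ?_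
    push_cast
    exact mul_le_mul_of_nonneg_left (hC (.inl ⟨n, rfl⟩) (.inr ⟨_, rfl⟩)) (by positivity)
  have hlim : Tendsto (fun n => (c : ℝ) ^ n * C) atTop (𝓝 0) := by
    simpa using (tendsto_pow_atTop_nhds_zero_of_lt_one c.2 hc).mul_const C
  exact tendsto_iff_dist_tendsto_zero.2 (squeeze_zero (fun _ => dist_nonneg) hle hlim)

theorem range_eq_of_eq_iUnion_image [MetricSpace X] {c : ℝ≥0} (hf : ∀ b, LipschitzWith c (f b))
    (hc : c < 1)
    (hπ : ∀ ω, π ω = f (ω 0) (π fun n => ω (n + 1))) (hπb : Bornology.IsBounded (range π))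
    {K : Set X} (hKne : K.Nonempty) (hKc : IsCompact K) (hK : K = ⋃ b, f b '' K) :
    range π = K := by
  apply Subset.antisymm
  · rintro _ ⟨ω, rfl⟩
    obtain ⟨y, hy⟩ := hKne
    have hmaps : ∀ b, MapsTo (f b) K K := fun b x hx =>
      hK.superset (mem_iUnion_of_mem b (mem_image_of_mem _ hx))
    refine hKc.isClosed.mem_of_tendsto (tendsto_compose hf hc hπ hπb ω (y := fun _ => y)
      (by simp)) (Eventually.of_forall fun n => ?_)
    exact mapsTo_compose hmaps ω n hy
  · intro x hx
    have hpre : ∀ z : K, ∃ b, ∃ w : K, f b w = z := fun ⟨z, hz⟩ => by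
      rw [hK, mem_iUnion] at hz
      obtain ⟨b, w, hw, rfl⟩ := hz
      exact ⟨b, ⟨w, hw⟩, rfl⟩
    choose b w hbw using hpre
    let t : ℕ → K := fun n => w^[n] ⟨x, hx⟩
    have hcomp : ∀ n, compose f (b ∘ t) n (t n) = x := by
      intro n
      induction n with
      | zero => rfl
      | succ n ih =>
        simp only [compose, Function.comp_apply, t, Function.iterate_succ_apply', hbw]
        exact ih
    refine ⟨b ∘ t, tendsto_nhds_unique (tendsto_compose hf hc hπ hπb (b ∘ t)
      (y := fun n => (t n : X)) ?_) ?_⟩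
    · exact hKc.isBounded.subset (range_subset_iff.2 fun n => (t n).2)
    · simp only [hcomp, tendsto_const_nhds]

end IFS

lemma rot_ne_zero (θ : ℝ) : rot θ ≠ 0 := Complex.exp_ne_zero _

lemma conj_rot (θ : ℝ) : conj (rot θ) = (rot θ)⁻¹ := by
  rw [rot, ← Complex.exp_conj, ← Complex.exp_neg]
  simp [Complex.conj_ofReal]

lemma norm_rot (θ : ℝ) : ‖rot θ‖ = 1 := by
  simp [rot, Complex.norm_exp]

lemma rot_pow_eq_one {θ : ℝ} {p : ℕ} {q : ℤ} (hp : 0 < p)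
    (hθ : θ = 2 * Real.pi * (q : ℝ) / (p : ℝ)) : rot θ ^ p = 1 := by
  have hpc : (p : ℂ) ≠ 0 := by exact_mod_cast hp.ne'
  have hexp : (p : ℂ) * (θ * Complex.I) = q * (2 * Real.pi * Complex.I) := by
    rw [hθ]
    push_cast
    field_simp
  rw [rot, ← Complex.exp_nat_mul, hexp, Complex.exp_int_mul_two_pi_mul_I]

lemma exists_zpow_eq_pow_lt {G₀ : Type*} [GroupWithZero G₀] {a : G₀} {n : ℕ} (hn : 0 < n)
    (ha : a ^ n = 1) (m : ℤ) : ∃ k < n, a ^ m = a ^ k := by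
  have ha0 : a ≠ 0 := by rintro rfl; simp [hn.ne'] at ha
  have hmod : 0 ≤ m % n := Int.emod_nonneg m (by omega)
  refine ⟨(m % n).toNat, by have := Int.emod_lt_of_pos m (by omega : (0 : ℤ) < n); omega, ?_⟩
  calc a ^ m = a ^ (m % n + n * (m / n)) := by rw [Int.emod_add_mul_ediv]
    _ = a ^ (m % n) := by rw [zpow_add₀ ha0, zpow_mul, zpow_natCast, ha, one_zpow, mul_one]
    _ = a ^ (m % n).toNat := by rw [← zpow_natCast, Int.toNat_of_nonneg hmod]

lemma rot_zpow_mem_Delta {θ : ℝ} {p : ℕ} (hp : 0 < p) (hρ : rot θ ^ p = 1) (m : ℤ) :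
    rot θ ^ m ∈ Delta θ p :=
  Or.inr (exists_zpow_eq_pow_lt hp hρ m)

lemma eta_succ (α : ℂ) (j : ℕ) : eta α (j + 1) = conj (eta α j) := by
  rcases Nat.even_or_odd j with h | h
  · simp [_root_.eta, h.add_one, Nat.not_odd_iff_even.2 h]
  · simp [_root_.eta, h, Nat.not_odd_iff_even.2 h.add_one]

lemma prod_eta_succ (α : ℂ) (n : ℕ) :
    ∏ j ∈ Finset.Icc 1 (n + 1), eta α j = α * conj (∏ j ∈ Finset.Icc 1 n, eta α j) := by
  induction n with
  | zero => simp [_root_.eta]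
  | succ n ih =>
    calc ∏ j ∈ Finset.Icc 1 (n + 2), eta α j
        = (∏ j ∈ Finset.Icc 1 (n + 1), eta α j) * eta α (n + 2) :=
          Finset.prod_Icc_succ_top (by omega) _
      _ = α * (conj (∏ j ∈ Finset.Icc 1 n, eta α j) * conj (eta α (n + 1))) := by
          rw [ih, eta_succ, mul_assoc]
      _ = α * conj (∏ j ∈ Finset.Icc 1 (n + 1), eta α j) := by
          rw [Finset.prod_Icc_succ_top (by omega), map_mul]

lemma norm_prod_eta (α : ℂ) (n : ℕ) : ‖∏ j ∈ Finset.Icc 1 n, eta α j‖ = ‖α‖ ^ n := by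
  rw [norm_prod]
  simp [_root_.eta, apply_ite]

lemma summable_mul_prod_eta {α : ℂ} (hα : ‖α‖ < 1) {δ : ℕ → ℂ} (hδ : ∀ n, ‖δ n‖ ≤ 1) :
    Summable fun n => δ n * ∏ j ∈ Finset.Icc 1 n, eta α j := by
  refine Summable.of_norm_bounded (summable_geometric_of_lt_one (norm_nonneg α) hα) fun n => ?_
  rw [norm_mul, norm_prod_eta]
  exact mul_le_of_le_one_left (by positivity) (hδ n)

lemma norm_tsum_mul_prod_eta_le {α : ℂ} (hα : ‖α‖ < 1) {δ : ℕ → ℂ} (hδ : ∀ n, ‖δ n‖ ≤ 1) :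
    ‖∑' n, δ n * ∏ j ∈ Finset.Icc 1 n, eta α j‖ ≤ (1 - ‖α‖)⁻¹ := by
  refine tsum_of_norm_bounded (hasSum_geometric_of_lt_one (norm_nonneg α) hα) fun n => ?_
  rw [norm_mul, norm_prod_eta]
  exact mul_le_of_le_one_left (by positivity) (hδ n)

/-- `psi α θ false` and `psi α θ true` are the maps `ψ₁` and `ψ₂` of the paper. -/
noncomputable def psi (α : ℂ) (θ : ℝ) (b : Bool) (z : ℂ) : ℂ :=
  if b then α * rot θ * conj z + α else α * conj z

lemma lipschitzWith_psi (α : ℂ) (θ : ℝ) (b : Bool) : LipschitzWith ‖α‖₊ (psi α θ b) := by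
  refine LipschitzWith.of_dist_le_mul fun z w => ?_
  cases b <;> simp [psi, dist_eq_norm, ← mul_sub, ← map_sub, norm_rot]

def codingExponent (ω : ℕ → Bool) (n : ℕ) : ℤ :=
  ∑ m ∈ Finset.range n, if ω m then (-1) ^ m else 0

/-- The digit sequence coded by `ω`: `ω n` says whether digit `n + 1` is nonzero, and a nonzero
digit at position `m + 1` turns the next nonzero digit by `e^{(-1)^m iθ}`, as the Signed Revolving
Condition demands. -/
noncomputable def codingDigit (θ : ℝ) (ω : ℕ → Bool) : ℕ → ℂ
  | 0 => 0
  | n + 1 => if ω n then rot θ ^ codingExponent ω n else 0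

noncomputable def coding (α : ℂ) (θ : ℝ) (ω : ℕ → Bool) : ℂ :=
  ∑' n, codingDigit θ ω n * ∏ j ∈ Finset.Icc 1 n, eta α j

lemma codingExponent_succ (ω : ℕ → Bool) (n : ℕ) :
    codingExponent ω (n + 1) = codingExponent ω n + if ω n then (-1) ^ n else 0 :=
  Finset.sum_range_succ _ _

lemma codingExponent_succ' (ω : ℕ → Bool) (n : ℕ) :
    codingExponent ω (n + 1) =
      (if ω 0 then 1 else 0) - codingExponent (fun m => ω (m + 1)) n := by
  rw [codingExponent, Finset.sum_range_succ', codingExponent, sub_eq_neg_add,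
    ← Finset.sum_neg_distrib]
  congr 1
  refine Finset.sum_congr rfl fun m _ => ?_
  split_ifs <;> simp [pow_succ]

lemma norm_codingDigit_le_one (θ : ℝ) (ω : ℕ → Bool) (n : ℕ) : ‖codingDigit θ ω n‖ ≤ 1 := by
  cases n with
  | zero => simp [codingDigit]
  | succ n => simp only [codingDigit]; split_ifs <;> simp [norm_rot]

lemma codingDigit_succ_succ (θ : ℝ) (ω : ℕ → Bool) (n : ℕ) :
    codingDigit θ ω (n + 2) =
      (if ω 0 then rot θ else 1) * conj (codingDigit θ (fun m => ω (m + 1)) (n + 1)) := by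
  simp only [codingDigit, codingExponent_succ']
  split_ifs <;> simp [map_zpow₀, conj_rot, zpow_sub₀ (rot_ne_zero θ), div_eq_mul_inv]

lemma coding_eq_psi {α : ℂ} (hα : ‖α‖ < 1) (θ : ℝ) (ω : ℕ → Bool) :
    coding α θ ω = psi α θ (ω 0) (coding α θ fun n => ω (n + 1)) := by
  set ω' : ℕ → Bool := fun n => ω (n + 1)
  have htail : ∀ n, codingDigit θ ω (n + 2) * ∏ j ∈ Finset.Icc 1 (n + 2), eta α j =
      α * (if ω 0 then rot θ else 1) *
        conj (codingDigit θ ω' (n + 1) * ∏ j ∈ Finset.Icc 1 (n + 1), eta α j) := fun n => by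
    rw [codingDigit_succ_succ, prod_eta_succ α (n + 1), map_mul]
    ring
  rw [coding, coding,
    ← (summable_mul_prod_eta hα (norm_codingDigit_le_one θ ω)).sum_add_tsum_nat_add 2,
    ← (summable_mul_prod_eta hα (norm_codingDigit_le_one θ ω')).sum_add_tsum_nat_add 1,
    tsum_congr htail, tsum_mul_left, ← Complex.conj_tsum]
  simp only [Finset.sum_range_succ, Finset.sum_range_zero, codingDigit, codingExponent]
  cases ω 0 <;> simp [psi, _root_.eta, add_comm]

lemma isBounded_range_coding {α : ℂ} (hα : ‖α‖ < 1) (θ : ℝ) :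
    Bornology.IsBounded (range (coding α θ)) :=
  isBounded_iff_forall_norm_le.2 ⟨_, forall_mem_range.2 fun ω =>
    norm_tsum_mul_prod_eta_le hα (norm_codingDigit_le_one θ ω)⟩

lemma codingDigit_succ_eq_zero_iff (θ : ℝ) (ω : ℕ → Bool) (n : ℕ) :
    codingDigit θ ω (n + 1) = 0 ↔ ω n = false := by
  simp only [codingDigit]
  cases ω n <;> simp [zpow_ne_zero _ (rot_ne_zero θ)]

lemma codingExponent_eq_of_forall_false {ω : ℕ → Bool} {a b : ℕ} (hab : a ≤ b)
    (h : ∀ m, a ≤ m → m < b → ω m = false) : codingExponent ω b = codingExponent ω a := by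
  unfold codingExponent
  rw [← Finset.sum_range_add_sum_Ico _ hab, add_eq_left]
  refine Finset.sum_eq_zero fun m hm => ?_
  rw [Finset.mem_Ico] at hm
  simp [h m hm.1 hm.2]

lemma src_codingDigit (θ : ℝ) (ω : ℕ → Bool) : SRC θ (codingDigit θ ω) := by
  intro j k hjk hj hk hgap
  obtain ⟨a, rfl⟩ := Nat.exists_eq_succ_of_ne_zero (show j ≠ 0 by rintro rfl; exact hj rfl)
  obtain ⟨b, rfl⟩ := Nat.exists_eq_succ_of_ne_zero (show k ≠ 0 by rintro rfl; exact hk rfl)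
  rw [Ne, codingDigit_succ_eq_zero_iff, Bool.not_eq_false] at hj hk
  have hexp : codingExponent ω b = codingExponent ω a + (-1) ^ a := by
    rw [codingExponent_eq_of_forall_false (a := a + 1) (by omega), codingExponent_succ, if_pos hj]
    exact fun m h1 h2 => (codingDigit_succ_eq_zero_iff θ ω m).1 (hgap (m + 1) (by omega) (by omega))
  simp only [codingDigit, hj, hk, if_true, hexp, zpow_add₀ (rot_ne_zero θ)]
  rcases Nat.even_or_odd a with ha | ha
  · simp [ha.add_one, ha.neg_one_pow, mul_comm]
  · simp [ha.neg_one_pow, Nat.not_odd_iff_even.2 ha.add_one, mul_comm]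

lemma firstNonzero_iff {δ : ℕ → ℂ} {c : ℂ} (hc : c ≠ 0) :
    FirstNonzero δ c ↔ ∀ n, δ n ≠ 0 → (∀ m < n, δ m = 0) → δ n = c := by
  classical
  constructor
  · rintro (h0 | ⟨j, hj, hlt⟩) n hn hmin
    · exact absurd (h0 n) hn
    · obtain rfl : j = n := by
        rcases lt_trichotomy j n with h | h | h
        · exact absurd (hmin j h) (hj ▸ hc)
        · exact h
        · exact absurd (hlt n h) hn
      exact hj
  · intro h
    by_cases hex : ∃ n, δ n ≠ 0
    · have hmin : ∀ m < Nat.find hex, δ m = 0 := fun m hm => not_not.1 (Nat.find_min hex hm)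
      exact Or.inr ⟨Nat.find hex, h _ (Nat.find_spec hex) hmin, hmin⟩
    · push Not at hex
      exact Or.inl hex

lemma firstNonzero_codingDigit (θ : ℝ) (ω : ℕ → Bool) : FirstNonzero (codingDigit θ ω) 1 := by
  refine (firstNonzero_iff one_ne_zero).2 fun n hn hmin => ?_
  obtain ⟨n, rfl⟩ := Nat.exists_eq_succ_of_ne_zero (show n ≠ 0 by rintro rfl; exact hn rfl)
  rw [Ne, codingDigit_succ_eq_zero_iff, Bool.not_eq_false] at hn
  have hexp : codingExponent ω n = 0 := codingExponent_eq_of_forall_false (Nat.zero_le n)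
    fun m _ hm => (codingDigit_succ_eq_zero_iff θ ω m).1 (hmin (m + 1) (by omega))
  simp [codingDigit, hn, hexp]

lemma wsigned_codingDigit {θ : ℝ} {p : ℕ} (hp : 0 < p) (hρ : rot θ ^ p = 1) (ω : ℕ → Bool) :
    Wsigned θ p (codingDigit θ ω) := by
  refine ⟨rfl, fun n => ?_, src_codingDigit θ ω⟩
  cases n with
  | zero => exact Or.inl rfl
  | succ n =>
    simp only [codingDigit]
    split_ifs
    · exact rot_zpow_mem_Delta hp hρ _
    · exact Or.inl rfl

lemma SRC.eq_of_eq_zero_iff {θ : ℝ} {δ δ' : ℕ → ℂ} {c : ℂ} (hc : c ≠ 0) (hδ : SRC θ δ)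
    (hδ' : SRC θ δ') (h0 : ∀ n, δ n = 0 ↔ δ' n = 0) (h1 : FirstNonzero δ c)
    (h1' : FirstNonzero δ' c) : δ = δ' := by
  funext n
  induction n using Nat.strong_induction_on with
  | _ n ih =>
  by_cases hn : δ n = 0
  · rw [hn, (h0 n).1 hn]
  have hn' : δ' n ≠ 0 := mt (h0 n).2 hn
  by_cases hprev : ∃ m < n, δ m ≠ 0
  · obtain ⟨m, hmn, hm⟩ := hprev
    set j := Nat.findGreatest (fun m => δ m ≠ 0) (n - 1)
    have hj : δ j ≠ 0 := Nat.findGreatest_spec (P := fun m => δ m ≠ 0) (by omega : m ≤ n - 1) hm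
    have hjn : j < n := by have := Nat.findGreatest_le (P := fun m => δ m ≠ 0) (n - 1); omega
    have hgap : ∀ m, j < m → m < n → δ m = 0 := fun m h1 h2 =>
      not_not.1 (Nat.findGreatest_is_greatest h1 (by omega))
    rw [hδ j n hjn hj hn hgap, hδ' j n hjn (mt (h0 j).2 hj) hn' fun m h1 h2 =>
      (h0 m).1 (hgap m h1 h2), ih j hjn]
  · push Not at hprev
    rw [(firstNonzero_iff hc).1 h1 n hn hprev,
      (firstNonzero_iff hc).1 h1' n hn' fun m hm => (h0 m).1 (hprev m hm)]

lemma Wsigned.eq_codingDigit {θ : ℝ} {p : ℕ} {δ : ℕ → ℂ} (hδ : Wsigned θ p δ)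
    (h1 : FirstNonzero δ 1) : δ = codingDigit θ fun n => δ (n + 1) != 0 :=
  hδ.2.2.eq_of_eq_zero_iff one_ne_zero (src_codingDigit θ _)
    (fun n => by
      rcases n with _ | n
      · simp [hδ.1, codingDigit]
      · simp [codingDigit_succ_eq_zero_iff]) h1
    (firstNonzero_codingDigit θ _)

lemma X2one_eq_range_coding (α : ℂ) {θ : ℝ} {p : ℕ} (hp : 0 < p) (hρ : rot θ ^ p = 1) :
    X2one α θ p = range (coding α θ) := by
  ext x
  constructor
  · rintro ⟨δ, hδ, h1, rfl⟩
    exact ⟨_, by rw [coding, ← hδ.eq_codingDigit h1]⟩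
  · rintro ⟨ω, rfl⟩
    exact ⟨codingDigit θ ω, wsigned_codingDigit hp hρ ω, firstNonzero_codingDigit θ ω, rfl⟩

lemma Wsigned.rot_pow_mul {θ : ℝ} {p : ℕ} {δ : ℕ → ℂ} (hρ : rot θ ^ p = 1)
    (hδ : Wsigned θ p δ) (k : ℕ) : Wsigned θ p fun n => rot θ ^ k * δ n := by
  refine ⟨by simp [hδ.1], fun n => ?_, fun j l hjl hj hl hgap => ?_⟩
  · rcases hδ.2.1 n with h | ⟨m, hm, h⟩
    · simp [h, Delta]
    · show rot θ ^ k * δ n ∈ Delta θ p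
      rw [h, ← pow_add, pow_eq_pow_mod _ hρ]
      exact Or.inr ⟨_, Nat.mod_lt _ (by omega), rfl⟩
  · have hk : rot θ ^ k ≠ 0 := pow_ne_zero _ (rot_ne_zero θ)
    simp only [ne_eq, mul_eq_zero, hk, false_or] at hj hl hgap ⊢
    rw [hδ.2.2 j l hjl hj hl hgap]
    ring

lemma Wsigned.exists_eq_rot_pow_mul {θ : ℝ} {p : ℕ} {δ : ℕ → ℂ} (hp : 0 < p)
    (hρ : rot θ ^ p = 1) (hδ : Wsigned θ p δ) :
    ∃ k < p, ∃ δ', Wsigned θ p δ' ∧ FirstNonzero δ' 1 ∧ δ = fun n => rot θ ^ k * δ' n := by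
  classical
  by_cases hex : ∃ n, δ n ≠ 0
  · obtain ⟨k, hk, hδk⟩ : ∃ k < p, δ (Nat.find hex) = rot θ ^ k :=
      (hδ.2.1 _).resolve_left (Nat.find_spec hex)
    refine ⟨k, hk, fun n => rot θ ^ (p - k) * δ n, hδ.rot_pow_mul hρ _,
      Or.inr ⟨Nat.find hex, ?_, fun m hm => ?_⟩, funext fun n => ?_⟩
    · show rot θ ^ (p - k) * δ _ = 1
      rw [hδk, ← pow_add, Nat.sub_add_cancel hk.le, hρ]
    · simp [not_not.1 (Nat.find_min hex hm)]
    · rw [← mul_assoc, ← pow_add, Nat.add_sub_cancel' hk.le, hρ, one_mul]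
  · push Not at hex
    exact ⟨0, hp, δ, hδ, Or.inl hex, by simp⟩

lemma X2full_eq_iUnion_rot_pow_mul_X2one (α : ℂ) {θ : ℝ} {p : ℕ} (hp : 0 < p)
    (hρ : rot θ ^ p = 1) :
    X2full α θ p = ⋃ k ∈ Finset.range p, (fun z => rot θ ^ k * z) '' X2one α θ p := by
  ext x
  simp only [mem_iUnion, Finset.mem_range, mem_image]
  constructor
  · rintro ⟨δ, hδ, rfl⟩
    obtain ⟨k, hk, δ', hδ', h1, rfl⟩ := hδ.exists_eq_rot_pow_mul hp hρ
    exact ⟨k, hk, _, ⟨δ', hδ', h1, rfl⟩, by simp only [mul_assoc, tsum_mul_left]⟩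
  · rintro ⟨k, hk, _, ⟨δ, hδ, -, rfl⟩, rfl⟩
    exact ⟨_, hδ.rot_pow_mul hρ k, by simp only [mul_assoc, tsum_mul_left]⟩

lemma range_coding_eq_of_eq_union_image {α : ℂ} {θ : ℝ} (hα : ‖α‖ < 1) {K : Set ℂ}
    (hKne : K.Nonempty) (hKc : IsCompact K)
    (hK : K = (fun z => α * conj z) '' K ∪ (fun z => α * rot θ * conj z + α) '' K) :
    range (coding α θ) = K := by
  refine IFS.range_eq_of_eq_iUnion_image (lipschitzWith_psi α θ) (mod_cast hα)
    (coding_eq_psi hα θ) (isBounded_range_coding hα θ) hKne hKc ?_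
  convert hK using 1
  ext z
  simp [psi, Bool.exists_bool]

theorem X2full_eq_union_rot_attractor_general (α : ℂ) (θ : ℝ) (p : ℕ) (q : ℤ) (hp : 0 < p)
    (hθ : θ = 2 * Real.pi * (q : ℝ) / (p : ℝ)) (hα : ‖α‖ < 1)
    (K : Set ℂ) (hKne : K.Nonempty) (hKc : IsCompact K)
    (hK : K = (fun z => α * starRingEnd ℂ z) '' K ∪
              (fun z => α * rot θ * starRingEnd ℂ z + α) '' K) :
    X2full α θ p = ⋃ k ∈ Finset.range p, (fun z => rot θ ^ k * z) '' K := by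
  have hρ : rot θ ^ p = 1 := rot_pow_eq_one hp hθ
  rw [X2full_eq_iUnion_rot_pow_mul_X2one α hp hρ, X2one_eq_range_coding α hp hρ,
    range_coding_eq_of_eq_union_image hα hKne hKc hK]

/-- X²_{α,θ} = ⋃_{k=0}^{p-1} (e^{iθ})^k K²_{α,θ}. -/
theorem X2full_eq_union_rot_attractor (α : ℂ) (θ : ℝ) (p : ℕ) (q : ℤ) (hp : 0 < p)
    (hq : Nat.Coprime q.natAbs p)
    (hθ : θ = 2 * Real.pi * (q : ℝ) / (p : ℝ)) (hα0 : 0 < ‖α‖) (hα : ‖α‖ < 1)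
    (K : Set ℂ) (hKne : K.Nonempty) (hKc : IsCompact K)
    (hK : K = (fun z => α * starRingEnd ℂ z) '' K ∪
              (fun z => α * rot θ * starRingEnd ℂ z + α) '' K) :
    X2full α θ p = ⋃ k ∈ Finset.range p, (fun z => rot θ ^ k * z) '' K :=
  X2full_eq_union_rot_attractor_general α θ p q hp hθ hα K hKne hKc hK
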